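/- Let Ω be a finite set and G ≤ Sym(Ω) an imprimitive Frobenius group. Then G is 2-closed, i.e., G = G^(2). -/

import Mathlib

section Prelude

variable {Ω : Type*}

/-- `G` is transitive on `Ω`. -/
def IsTransSub (G : Subgroup (Equiv.Perm Ω)) : Prop :=
  ∀ a b : Ω, ∃ g ∈ G, g a = b

/-- The orbit of `β` under the stabilizer of `α` in `G`. -/
def stabOrbit (G : Subgroup (Equiv.Perm Ω)) (α β : Ω) : Set Ω :=
  {γ : Ω | ∃ g ∈ G, g α = α ∧ g β = γ}

/-- `G` is `3/2`-transitive: transitive, and all orbits of a point stabilizer `G_α`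
on `Ω \ {α}` have the same size `m > 1`. -/
def IsThreeHalvesTrans (G : Subgroup (Equiv.Perm Ω)) : Prop :=
  IsTransSub G ∧ ∃ m : ℕ, 1 < m ∧ ∀ α β : Ω, β ≠ α → (stabOrbit G α β).ncard = m

/-- `G` is `2`-transitive. -/
def IsTwoTrans (G : Subgroup (Equiv.Perm Ω)) : Prop :=
  ∀ a b c d : Ω, a ≠ b → c ≠ d → ∃ g ∈ G, g a = c ∧ g b = d

/-- The partition (equivalence relation) `r` is preserved by `G`. -/
def IsGInvariantSetoid (G : Subgroup (Equiv.Perm Ω)) (r : Setoid Ω) : Prop :=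
  ∀ g ∈ G, ∀ a b : Ω, r a b → r (g a) (g b)

/-- `G` is primitive: transitive and the only `G`-invariant partitions of `Ω` are
the partition into singletons (`⊥`) and the one-class partition (`⊤`). -/
def IsPrimitiveSub (G : Subgroup (Equiv.Perm Ω)) : Prop :=
  IsTransSub G ∧ ∀ r : Setoid Ω, IsGInvariantSetoid G r → r = ⊥ ∨ r = ⊤

/-- `G` is a Frobenius group: transitive, point stabilizers are nontrivial, and
two-point stabilizers are trivial. -/
def IsFrobeniusSub (G : Subgroup (Equiv.Perm Ω)) : Prop :=
  IsTransSub G ∧ (∀ α : Ω, ∃ g ∈ G, g ≠ 1 ∧ g α = α) ∧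
    (∀ g ∈ G, ∀ α β : Ω, α ≠ β → g α = α → g β = β → g = 1)

/-- The `k`-closure of `G`: all permutations `σ` such that for every `k`-tuple `v`
there is `g ∈ G` agreeing with `σ` on `v`; it is the largest subgroup of `Sym(Ω)`
with the same orbits as `G` on `Ω^k`. -/
def kClosure (G : Subgroup (Equiv.Perm Ω)) (k : ℕ) : Subgroup (Equiv.Perm Ω) where
  carrier := {σ : Equiv.Perm Ω | ∀ v : Fin k → Ω, ∃ g ∈ G, ∀ i, σ (v i) = g (v i)}
  one_mem' := fun v => ⟨1, G.one_mem, fun _ => rfl⟩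
  mul_mem' := by
    intro a b ha hb v
    obtain ⟨g, hg, hgv⟩ := hb v
    obtain ⟨h, hh, hhv⟩ := ha fun i => b (v i)
    refine ⟨h * g, G.mul_mem hh hg, fun i => ?_⟩
    simp only [Equiv.Perm.mul_apply]
    rw [hhv i, hgv i]
  inv_mem' := by
    intro a ha v
    obtain ⟨g, hg, hgv⟩ := ha fun i => a⁻¹ (v i)
    refine ⟨g⁻¹, G.inv_mem hg, fun i => ?_⟩
    have h := hgv i
    rw [show a (a⁻¹ (v i)) = v i from a.apply_symm_apply (v i)] at h
    calc a⁻¹ (v i) = g⁻¹ (g (a⁻¹ (v i))) := by simp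
    _ = g⁻¹ (v i) := by rw [← h]

/-- `G` is an affine permutation group: it has a normal subgroup `V` which is an
elementary abelian `p`-group acting regularly on `Ω`. -/
def IsAffineSub (G : Subgroup (Equiv.Perm Ω)) : Prop :=
  ∃ p : ℕ, p.Prime ∧ ∃ V : Subgroup (Equiv.Perm Ω), V ≤ G ∧
    (∀ g ∈ G, ∀ v ∈ V, g * v * g⁻¹ ∈ V) ∧
    (∀ v ∈ V, ∀ w ∈ V, v * w = w * v) ∧
    (∀ v ∈ V, v ^ p = 1) ∧
    (∀ a b : Ω, ∃! v : Equiv.Perm Ω, v ∈ V ∧ v a = b)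

/-- `G` is almost simple: it has a nonabelian simple normal subgroup `S` whose
centralizer in `G` is trivial. -/
def IsAlmostSimpleSub (G : Subgroup (Equiv.Perm Ω)) : Prop :=
  ∃ S : Subgroup (Equiv.Perm Ω), S ≤ G ∧
    (∀ g ∈ G, ∀ s ∈ S, g * s * g⁻¹ ∈ S) ∧
    IsSimpleGroup S ∧ (∃ s ∈ S, ∃ t ∈ S, s * t ≠ t * s) ∧
    (∀ g ∈ G, (∀ s ∈ S, g * s = s * g) → g = 1)

/-- The conjugation homomorphism `Sym(α) → Sym(β)` induced by a bijection `e : α ≃ β`. -/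
def permConjHom {α β : Type*} (e : α ≃ β) : Equiv.Perm α →* Equiv.Perm β where
  toFun σ := e.permCongr σ
  map_one' := by ext x; simp
  map_mul' σ τ := by
    ext x
    simp [Equiv.Perm.mul_apply]

/-- The conjugate of `G ≤ Sym(α)` under a bijection `e : α ≃ β`. -/
def conjGroup {α β : Type*} (e : α ≃ β) (G : Subgroup (Equiv.Perm α)) :
    Subgroup (Equiv.Perm β) :=
  G.map (permConjHom e)

/-- The affine semilinear group `AΓL(1, p^d)` over a field `F` (of order `p^d`),
as a set of permutations: all maps `x ↦ a * x^(p^i) + b` with `a ≠ 0`, `0 ≤ i < d`. -/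
def AGammaL1Set (F : Type*) [Field F] (p d : ℕ) : Set (Equiv.Perm F) :=
  {σ : Equiv.Perm F | ∃ (a b : F) (i : ℕ), a ≠ 0 ∧ i < d ∧ ∀ x : F, σ x = a * x ^ p ^ i + b}

/-- The Passman group `AS₀` over a field `F` (of order `p^(d/2)`) with respect to
a generator `θ` of `Fˣ`: the subgroup of `Sym(F × F)` generated by all translations
together with `(x,y) ↦ (θx, θ⁻¹y)`, `(x,y) ↦ (-x, y)` and `(x,y) ↦ (y, x)`. -/
def PassmanGroup (F : Type*) [Field F] (θ : Fˣ) : Subgroup (Equiv.Perm (F × F)) :=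
  Subgroup.closure
    ({σ : Equiv.Perm (F × F) | ∃ u v : F, σ = (Equiv.addRight u).prodCongr (Equiv.addRight v)} ∪
      {(Equiv.mulLeft₀ (θ : F) θ.ne_zero).prodCongr
          (Equiv.mulLeft₀ ((θ⁻¹ : Fˣ) : F) θ⁻¹.ne_zero),
        (Equiv.neg F).prodCongr (Equiv.refl F),
        Equiv.prodComm F F})

/-- The socle of a group: the subgroup generated by all minimal normal subgroups. -/
def groupSocle (H : Type*) [Group H] : Subgroup H :=
  sSup {N : Subgroup H | N.Normal ∧ N ≠ ⊥ ∧
    ∀ M : Subgroup H, M.Normal → M ≠ ⊥ → M ≤ N → M = N}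

end Prelude

/-!
Let `r` be a nontrivial `G`-invariant partition, with blocks of size `n`. For a point `x` and a
block `B ∌ x`, the subgroup of `G_x` stabilizing `B` acts semiregularly on `B` and on `B_x \ {x}`,
so its order divides both `n` and `n - 1`: it is trivial. Hence an element of the 2-closure that
fixes `p` and maps a point `z ∉ B_p` into its own block fixes `z`, because it agrees on `p, z` with
some `g ∈ G_p`, which then stabilizes `B_z`. From this, an element of the 2-closure fixing two
distinct points of one block is the identity. Every element of the 2-closure agrees with an element
of `G` on such a pair, so it lies in `G`.
-/

open Equiv MulAction Pointwise

section FreeAction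

variable {Ω : Type*} [Finite Ω]

theorem card_dvd_ncard_of_free {H : Subgroup (Perm Ω)} {S : Set Ω}
    (hS : ∀ h ∈ H, ∀ y ∈ S, h y ∈ S) (hfree : ∀ h ∈ H, ∀ y ∈ S, h y = y → h = 1) :
    Nat.card H ∣ S.ncard := by
  classical
  have := Fintype.ofFinite Ω
  rw [Set.ncard_eq_toFinset_card' S, Finset.card_eq_sum_card_fiberwise
    (f := orbit H) (t := S.toFinset.image (orbit H)) fun y hy => Finset.mem_image_of_mem _ hy]
  refine Finset.dvd_sum fun O hO => ?_
  obtain ⟨y, hy, rfl⟩ := Finset.mem_image.mp hO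
  rw [Set.mem_toFinset] at hy
  have hfiber : {y' ∈ S.toFinset | orbit H y' = orbit H y} = (orbit H y).toFinset := by
    ext y'
    simp only [Finset.mem_filter, Set.mem_toFinset, orbit_eq_iff]
    refine ⟨And.right, fun hy' => ⟨?_, hy'⟩⟩
    obtain ⟨h, rfl⟩ := hy'
    exact hS h h.2 y hy
  have hstab : stabilizer H y = ⊥ :=
    (Subgroup.eq_bot_iff_forall _).mpr fun h hh => Subtype.ext (hfree h h.2 y hy hh)
  rw [hfiber, ← Set.ncard_eq_toFinset_card', ← index_stabilizer, hstab, Subgroup.index_bot]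

end FreeAction

section Blocks

variable {Ω : Type*} {G : Subgroup (Perm Ω)} {r : Setoid Ω}

theorem le_kClosure (k : ℕ) : G ≤ kClosure G k :=
  fun g hg _ => ⟨g, hg, fun _ => rfl⟩

theorem exists_pair_of_mem_kClosure_two {σ : Perm Ω} (hσ : σ ∈ kClosure G 2) (x y : Ω) :
    ∃ g ∈ G, σ x = g x ∧ σ y = g y := by
  obtain ⟨g, hg, h⟩ := hσ ![x, y]
  exact ⟨g, hg, h 0, h 1⟩

theorem IsGInvariantSetoid.kClosure_two (hr : IsGInvariantSetoid G r) :
    IsGInvariantSetoid (kClosure G 2) r := by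
  intro σ hσ a b hab
  obtain ⟨g, hg, ha, hb⟩ := exists_pair_of_mem_kClosure_two hσ a b
  rw [ha, hb]
  exact hr g hg a b hab

theorem IsGInvariantSetoid.smul_setOf_rel (hr : IsGInvariantSetoid G r) {g : Perm Ω}
    (hg : g ∈ G) (w : Ω) : g • {y | r w y} = {y | r (g w) y} := by
  ext y
  refine ⟨?_, fun hy => ⟨g⁻¹ y, ?_, by simp⟩⟩
  · rintro ⟨y, hy, rfl⟩
    exact hr g hg w y hy
  · simpa using hr g⁻¹ (inv_mem hg) (g w) y hy

theorem IsGInvariantSetoid.ncard_setOf_rel_eq (hr : IsGInvariantSetoid G r)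
    (hG : IsTransSub G) (a b : Ω) : {y | r a y}.ncard = {y | r b y}.ncard := by
  obtain ⟨g, hg, rfl⟩ := hG a b
  rw [← hr.smul_setOf_rel hg, Set.ncard_smul_set]

theorem exists_not_rel_of_ne_top (hr : r ≠ ⊤) (p : Ω) : ∃ z, ¬ r p z := by
  by_contra! h
  exact hr (Setoid.eq_top_iff.mpr fun x y => r.trans (r.symm (h x)) (h y))

theorem exists_rel_ne_of_ne_bot (hr : r ≠ ⊥) : ∃ a b, r a b ∧ a ≠ b := by
  by_contra! h
  exact hr (Setoid.ext fun x y => ⟨h x y, fun hxy => hxy ▸ r.refl x⟩)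

end Blocks

section Frobenius

variable {Ω : Type*} [Finite Ω] {G : Subgroup (Perm Ω)} {r : Setoid Ω}

theorem IsFrobeniusSub.eq_one_of_stabilizes_block (hF : IsFrobeniusSub G)
    (hr : IsGInvariantSetoid G r) {x w : Ω} (hxw : ¬ r w x) {g : Perm Ω} (hg : g ∈ G)
    (hgx : g x = x) (hgw : r w (g w)) : g = 1 := by
  set B := {y | r w y}
  set H := G ⊓ stabilizer (Perm Ω) x ⊓ stabilizer (Perm Ω) B
  have hfree : ∀ h ∈ H, ∀ y, y ≠ x → h y = y → h = 1 := fun h hh y hy =>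
    hF.2.2 h hh.1.1 x y hy.symm hh.1.2
  have hB : Nat.card H ∣ B.ncard := by
    refine card_dvd_ncard_of_free (fun h hh y hy => ?_)
      (fun h hh y hy => hfree h hh y fun hyx => hxw (hyx ▸ hy))
    rw [← show h • B = B from hh.2]
    exact Set.smul_mem_smul_set hy
  have hBx : Nat.card H ∣ ({y | r x y} \ {x}).ncard := by
    refine card_dvd_ncard_of_free (fun h hh y hy => ⟨?_, ?_⟩)
      (fun h hh y hy => hfree h hh y hy.2)
    · simpa [show h x = x from hh.1.2] using hr h hh.1.1 x y hy.1
    · exact fun hyx => hy.2 (h.injective (hyx.trans (hh.1.2 : h x = x).symm))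
  have hgH : g ∈ H := ⟨⟨hg, hgx⟩, by
    show g • B = B
    rw [hr.smul_setOf_rel hg]
    exact Set.ext fun y => ⟨r.trans hgw, r.trans (r.symm hgw)⟩⟩
  have hdvd : Nat.card H ∣ B.ncard - (B.ncard - 1) := by
    rw [Set.ncard_sdiff_singleton_of_mem (show x ∈ {y | r x y} from r.refl x),
      hr.ncard_setOf_rel_eq hF.1 x w] at hBx
    exact Nat.dvd_sub hB hBx
  have hpos : 0 < B.ncard := (Set.ncard_pos (Set.toFinite _)).mpr ⟨w, r.refl w⟩
  rw [Nat.sub_sub_self hpos, Nat.dvd_one, Subgroup.card_eq_one] at hdvd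
  simpa [hdvd] using hgH

end Frobenius

section TwoClosure

variable {Ω : Type*} [Finite Ω] {G : Subgroup (Perm Ω)} {r : Setoid Ω} {σ : Perm Ω}

theorem apply_eq_self_of_rel_apply (hF : IsFrobeniusSub G) (hr : IsGInvariantSetoid G r)
    (hσ : σ ∈ kClosure G 2) {p z : Ω} (hpz : ¬ r z p) (hp : σ p = p) (hz : r z (σ z)) :
    σ z = z := by
  obtain ⟨g, hg, hgp, hgz⟩ := exists_pair_of_mem_kClosure_two hσ p z
  rw [hgz] at hz ⊢
  rw [hF.eq_one_of_stabilizes_block hr hpz hg (hgp ▸ hp) hz, Perm.one_apply]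

/-- Writing `σ z = g z = g' z` with `g ∈ G_p`, `g' ∈ G_β`, the element `g'⁻¹ g` fixes `z`
and stabilizes the block of `p`, so `g = g'` fixes both `p` and `β`. -/
theorem apply_eq_self_of_not_rel (hF : IsFrobeniusSub G) (hr : IsGInvariantSetoid G r)
    (hσ : σ ∈ kClosure G 2) {p β z : Ω} (hpβ : p ≠ β) (hrβ : r p β) (hp : σ p = p)
    (hβ : σ β = β) (hz : ¬ r p z) : σ z = z := by
  obtain ⟨g, hg, hgp, hgz⟩ := exists_pair_of_mem_kClosure_two hσ p z
  obtain ⟨g', hg', hg'β, hg'z⟩ := exists_pair_of_mem_kClosure_two hσ β z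
  rw [hp] at hgp
  rw [hβ] at hg'β
  have hblock : r p ((g'⁻¹ * g) p) := by
    have := hr g'⁻¹ (inv_mem hg') β p (r.symm hrβ)
    rw [Perm.inv_eq_iff_eq.mpr hg'β] at this
    rw [Perm.mul_apply, ← hgp]
    exact r.trans hrβ this
  have hfix : (g'⁻¹ * g) z = z := by
    rw [Perm.mul_apply, ← hgz, hg'z, Perm.inv_eq_iff_eq]
  have hgg' : g = g' := inv_mul_eq_one.mp
    (hF.eq_one_of_stabilizes_block hr hz (mul_mem (inv_mem hg') hg) hfix hblock) |>.symm
  subst hgg'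
  rw [hgz, hF.2.2 g hg p β hpβ hgp.symm hg'β.symm, Perm.one_apply]

theorem eq_one_of_apply_eq_self_of_rel (hF : IsFrobeniusSub G) (hr : IsGInvariantSetoid G r)
    (hrt : r ≠ ⊤) (hσ : σ ∈ kClosure G 2) {p β : Ω} (hpβ : p ≠ β) (hrβ : r p β)
    (hp : σ p = p) (hβ : σ β = β) : σ = 1 := by
  ext y
  rw [Perm.one_apply]
  by_cases hy : r p y
  · obtain ⟨z, hz⟩ := exists_not_rel_of_ne_top hrt p
    have hσz := apply_eq_self_of_not_rel hF hr hσ hpβ hrβ hp hβ hz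
    have hσy : r p (σ y) := hp ▸ hr.kClosure_two σ hσ p y hy
    exact apply_eq_self_of_rel_apply hF hr hσ (fun hyz => hz (r.trans hy hyz)) hσz
      (r.trans (r.symm hy) hσy)
  · exact apply_eq_self_of_not_rel hF hr hσ hpβ hrβ hp hβ hy

end TwoClosure

/-- An imprimitive Frobenius group is 2-closed. -/
theorem imprimitive_frobenius_twoClosed {Ω : Type*} [Fintype Ω]
    (G : Subgroup (Equiv.Perm Ω)) (hF : IsFrobeniusSub G)
    (himp : ¬IsPrimitiveSub G) :
    G = kClosure G 2 := by
  simp only [IsPrimitiveSub, not_and, not_forall, not_or] at himp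
  obtain ⟨r, hr, hrb, hrt⟩ := himp hF.1
  obtain ⟨p, β, hrβ, hpβ⟩ := exists_rel_ne_of_ne_bot hrb
  refine le_antisymm (le_kClosure 2) fun σ hσ => ?_
  obtain ⟨g, hg, hgp, hgβ⟩ := exists_pair_of_mem_kClosure_two hσ p β
  have hfix : ∀ x, σ x = g x → (g⁻¹ * σ) x = x := fun x hx => by
    rw [Perm.mul_apply, hx, Perm.inv_eq_iff_eq]
  have : g⁻¹ * σ = 1 := eq_one_of_apply_eq_self_of_rel hF hr hrt
    (mul_mem (inv_mem (le_kClosure 2 hg)) hσ) hpβ hrβ (hfix p hgp) (hfix β hgβ)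
  exact inv_mul_eq_one.mp this ▸ hg
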